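/- Let P = p_1^{r_1}⋯p_s^{r_s} with p_i ≥ 2 pairwise coprime and r_i ≥ 1, and suppose the digits satisfy x_{i,r_i} ≠ 0 for all i. Then φ_{p_i}(n) ∈ [[x_i]_{r_i} − p_i^{−r_i}, [x_i]_{r_i}) for all i = 1,...,s if and only if n ≡ ẍ − Σ_{i=1}^s M_i P p_i^{−1} (mod P), where ẍ = Σ_i M_i (P/p_i^{r_i}) ẋ_{i,r_i} and M_i is the inverse of P/p_i^{r_i} mod p_i^{r_i}. -/

import Mathlib

/-!
By the recursion `φ_p(n) = (n mod p + φ_p(⌊n / p⌋)) / p` and induction on `r`, `φ_p(n)` lies in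
the elementary interval `[Σ_{i<r} y_i p^{-(i+1)}, Σ_{i<r} y_i p^{-(i+1)} + p^{-r})` (digits
`y_i < p`) exactly when `n ≡ Σ_{i<r} y_i p^i (mod p^r)`. As `x_{i,r_i} ≠ 0`, the left endpoint
`[x_i]_{r_i} − p_i^{−r_i}` has the digits `x_{i,1}, …, x_{i,r_i−1}, x_{i,r_i} − 1`, so the `i`-th
condition reads `n ≡ ẋ_{i,r_i} − p_i^{r_i−1} (mod p_i^{r_i})`. The Chinese remainder theorem
combines these congruences, and `P / p_i = (P / p_i^{r_i}) p_i^{r_i−1}`.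
-/

open scoped Classical

/-- Base-`p` radical inverse (van der Corput) of `n`. -/
noncomputable def radInv (p n : ℕ) : ℝ :=
  ∑ i ∈ Finset.range n, ((n / p ^ i % p : ℕ) : ℝ) / (p : ℝ) ^ (i + 1)

section DigitExpansions

lemma sum_range_succ_div_pow_succ {K : Type*} [Field K] (a : ℕ → K) (q : K) (r : ℕ) :
    ∑ i ∈ Finset.range (r + 1), a i / q ^ (i + 1)
      = (a 0 + ∑ i ∈ Finset.range r, a (i + 1) / q ^ (i + 1)) / q := by
  rw [Finset.sum_range_succ', add_comm, add_div, Finset.sum_div]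
  congr 1
  · simp
  · exact Finset.sum_congr rfl fun i _ => by rw [pow_succ _ (i + 1), div_div]

lemma sum_range_succ_mul_pow {R : Type*} [CommSemiring R] (a : ℕ → R) (q : R) (r : ℕ) :
    ∑ i ∈ Finset.range (r + 1), a i * q ^ i
      = a 0 + q * ∑ i ∈ Finset.range r, a (i + 1) * q ^ i := by
  rw [Finset.sum_range_succ', add_comm, Finset.mul_sum]
  simp only [pow_zero, mul_one, pow_succ', mul_left_comm]

variable {p : ℕ}

lemma sum_range_mul_pow_lt {r : ℕ} {y : ℕ → ℕ} (hy : ∀ i < r, y i < p) :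
    ∑ i ∈ Finset.range r, y i * p ^ i < p ^ r := by
  induction r generalizing y with
  | zero => simp
  | succ r ih =>
    have hB := ih (y := fun i => y (i + 1)) fun i hi => hy (i + 1) (by omega)
    have hy0 := hy 0 (by omega)
    rw [sum_range_succ_mul_pow, pow_succ']
    nlinarith

lemma sum_range_div_pow_succ_add_inv_le_one {r : ℕ} {y : ℕ → ℕ} (hy : ∀ i < r, y i < p) :
    ∑ i ∈ Finset.range r, (y i : ℝ) / (p : ℝ) ^ (i + 1) + ((p : ℝ) ^ r)⁻¹ ≤ 1 := by
  induction r generalizing y with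
  | zero => simp
  | succ r ih =>
    have hF := ih (y := fun i => y (i + 1)) fun i hi => hy (i + 1) (by omega)
    have hy0 : (y 0 : ℝ) + 1 ≤ p := by exact_mod_cast hy 0 (by omega)
    have hp : (0 : ℝ) < p := by linarith [(y 0).cast_nonneg (α := ℝ)]
    rw [sum_range_succ_div_pow_succ, pow_succ, mul_inv, ← div_eq_mul_inv, ← add_div,
      div_le_one hp]
    linarith

lemma add_mul_eq_add_mul_iff_of_lt {a b c d : ℕ} (ha : a < p) (hb : b < p) :
    a + p * c = b + p * d ↔ a = b ∧ c = d := by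
  refine ⟨fun h => ?_, by rintro ⟨rfl, rfl⟩; rfl⟩
  have hp : 0 < p := by omega
  have hmod := congrArg (· % p) h
  have hdiv := congrArg (· / p) h
  simp only [Nat.add_mul_mod_self_left, Nat.mod_eq_of_lt ha, Nat.mod_eq_of_lt hb] at hmod
  simp only [Nat.add_mul_div_left _ _ hp, Nat.div_eq_of_lt ha, Nat.div_eq_of_lt hb] at hdiv
  omega

end DigitExpansions

section RadicalInverse

variable {p : ℕ}

lemma radInv_eq_sum_range_of_le (hp : 2 ≤ p) {n N : ℕ} (hN : n ≤ N) :
    radInv p n = ∑ i ∈ Finset.range N, ((n / p ^ i % p : ℕ) : ℝ) / (p : ℝ) ^ (i + 1) := by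
  refine Finset.sum_subset (Finset.range_subset_range.2 hN) fun i _ hi => ?_
  have hn : n < p ^ i := (Nat.lt_pow_self hp).trans_le' (by simpa using hi)
  simp [Nat.div_eq_of_lt hn]

lemma radInv_nonneg (p n : ℕ) : 0 ≤ radInv p n := by
  unfold radInv; positivity

lemma radInv_eq_mod_add_div (hp : 2 ≤ p) (n : ℕ) :
    radInv p n = ((n % p : ℕ) + radInv p (n / p)) / p := by
  rw [radInv_eq_sum_range_of_le hp (Nat.le_succ n), sum_range_succ_div_pow_succ,
    radInv_eq_sum_range_of_le hp (Nat.div_le_self n p)]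
  simp only [pow_zero, Nat.div_one, pow_succ' p, Nat.div_div_eq_div_mul]

lemma radInv_lt_one (hp : 2 ≤ p) (n : ℕ) : radInv p n < 1 := by
  induction n using Nat.strong_induction_on with
  | _ n ih =>
    rcases Nat.eq_zero_or_pos n with rfl | hn
    · simp [radInv]
    have hdigit : ((n % p : ℕ) : ℝ) + 1 ≤ p := by
      exact_mod_cast Nat.mod_lt n (by omega)
    rw [radInv_eq_mod_add_div hp, div_lt_one (by positivity)]
    linarith [ih (n / p) (Nat.div_lt_self hn (by omega))]

end RadicalInverse

lemma intCast_add_mem_Ico_iff {K : Type*} [Field K] [LinearOrder K] [IsStrictOrderedRing K]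
    {a b : ℤ} {u v w : K} (hu : u ∈ Set.Ico 0 1) (hv : 0 ≤ v)
    (hvw : v + w ≤ 1) :
    (a : K) + u ∈ Set.Ico ((b : K) + v) (b + v + w) ↔ a = b ∧ u ∈ Set.Ico v (v + w) := by
  refine ⟨fun ⟨hlo, hhi⟩ => ?_, by rintro ⟨rfl, hlo, hhi⟩; constructor <;> linarith⟩
  obtain ⟨hu0, hu1⟩ := hu
  have hab : a = b := by
    have h1 : (a : K) < b + 1 := by linarith
    have h2 : (b : K) < a + 1 := by linarith
    have h1' : a < b + 1 := by exact_mod_cast h1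
    have h2' : b < a + 1 := by exact_mod_cast h2
    omega
  subst hab
  exact ⟨rfl, by linarith, by linarith⟩

lemma div_mem_Ico_div_iff {K : Type*} [Field K] [LinearOrder K] [IsStrictOrderedRing K]
    {a b c d : K} (hd : 0 < d) :
    a / d ∈ Set.Ico (b / d) (b / d + c / d) ↔ a ∈ Set.Ico b (b + c) := by
  rw [← add_div, Set.mem_Ico, Set.mem_Ico, div_le_div_iff_of_pos_right hd,
    div_lt_div_iff_of_pos_right hd]

theorem radInv_mem_Ico_iff_mod_eq {p : ℕ} (hp : 2 ≤ p) (r : ℕ) {y : ℕ → ℕ}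
    (hy : ∀ i < r, y i < p) (n : ℕ) :
    radInv p n ∈ Set.Ico (∑ i ∈ Finset.range r, (y i : ℝ) / (p : ℝ) ^ (i + 1))
        (∑ i ∈ Finset.range r, (y i : ℝ) / (p : ℝ) ^ (i + 1) + ((p : ℝ) ^ r)⁻¹) ↔
      n % p ^ r = ∑ i ∈ Finset.range r, y i * p ^ i := by
  induction r generalizing y n with
  | zero => simp [radInv_nonneg, radInv_lt_one hp, Nat.mod_one]
  | succ r ih =>
    have hy' : ∀ i < r, y (i + 1) < p := fun i hi => hy (i + 1) (by omega)
    have hy0 : y 0 < p := hy 0 (by omega)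
    have hp0 : (0 : ℝ) < p := by positivity
    -- after scaling by `p`, the integer parts `n % p` and `y 0` must agree since both
    -- `radInv p (n / p)` and the tail interval lie in `[0, 1)`
    rw [sum_range_succ_div_pow_succ, radInv_eq_mod_add_div hp, pow_succ, mul_inv,
      ← div_eq_mul_inv _ (p : ℝ), div_mem_Ico_div_iff hp0, sum_range_succ_mul_pow, pow_succ',
      Nat.mod_mul, add_mul_eq_add_mul_iff_of_lt (Nat.mod_lt n (by omega)) hy0, ← ih hy',
      ← Int.cast_natCast (n % p), ← Int.cast_natCast (y 0), intCast_add_mem_Ico_iff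
        ⟨radInv_nonneg p _, radInv_lt_one hp _⟩ (by positivity)
        (sum_range_div_pow_succ_add_inv_le_one hy'), Nat.cast_inj]

lemma sum_Icc_one_eq_sum_range {M : Type*} [AddCommMonoid M] (f : ℕ → M) (r : ℕ) :
    ∑ j ∈ Finset.Icc 1 r, f j = ∑ i ∈ Finset.range r, f (i + 1) := by
  rw [← Finset.Ico_add_one_right_eq_Icc, Finset.sum_Ico_eq_sum_range]
  simp [add_comm]

theorem radInv_mem_Ico_sub_iff_modEq {p r : ℕ} (hp : 2 ≤ p) (hr : 1 ≤ r) {x : ℕ → ℕ}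
    (hx : ∀ j, 1 ≤ j → j ≤ r → x j < p) (hxtop : x r ≠ 0) (n : ℕ) :
    ((∑ j ∈ Finset.Icc 1 r, (x j : ℝ) / (p : ℝ) ^ j) - ((p : ℝ) ^ r)⁻¹ ≤ radInv p n ∧
        radInv p n < ∑ j ∈ Finset.Icc 1 r, (x j : ℝ) / (p : ℝ) ^ j) ↔
      (n : ℤ) ≡ (∑ j ∈ Finset.Icc 1 r, (x j : ℤ) * (p : ℤ) ^ (j - 1)) - (p : ℤ) ^ (r - 1)
        [ZMOD (p : ℤ) ^ r] := by
  obtain ⟨k, rfl⟩ : ∃ k, r = k + 1 := ⟨r - 1, by omega⟩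
  set y : ℕ → ℕ := fun i => if i = k then x (k + 1) - 1 else x (i + 1)
  have hxk : 1 ≤ x (k + 1) := Nat.one_le_iff_ne_zero.2 hxtop
  have hy : ∀ i < k + 1, y i < p := by
    intro i hi
    have := hx (i + 1) (by omega) (by omega)
    simp only [y]
    split_ifs with h
    · subst h; omega
    · exact this
  have hy_lt : ∀ i < k, y i = x (i + 1) := fun i hi => if_neg (by omega)
  have hy_k : y k = x (k + 1) - 1 := if_pos rfl
  have hleft : ∑ j ∈ Finset.Icc 1 (k + 1), (x j : ℝ) / (p : ℝ) ^ j - ((p : ℝ) ^ (k + 1))⁻¹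
      = ∑ i ∈ Finset.range (k + 1), (y i : ℝ) / (p : ℝ) ^ (i + 1) := by
    rw [sum_Icc_one_eq_sum_range, Finset.sum_range_succ, Finset.sum_range_succ,
      Finset.sum_congr rfl fun i hi => by rw [← hy_lt i (Finset.mem_range.1 hi)], hy_k,
      Nat.cast_sub hxk, sub_div, Nat.cast_one, one_div, add_sub_assoc]
  have hres : (∑ j ∈ Finset.Icc 1 (k + 1), (x j : ℤ) * (p : ℤ) ^ (j - 1)) - (p : ℤ) ^ (k + 1 - 1)
      = ((∑ i ∈ Finset.range (k + 1), y i * p ^ i : ℕ) : ℤ) := by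
    rw [sum_Icc_one_eq_sum_range, Finset.sum_range_succ, Finset.sum_range_succ,
      Finset.sum_congr rfl fun i hi => by rw [← hy_lt i (Finset.mem_range.1 hi)], hy_k]
    push_cast [Nat.cast_sub hxk]
    ring
  rw [hres, eq_add_of_sub_eq hleft, add_sub_cancel_right, ← Set.mem_Ico,
    radInv_mem_Ico_iff_mod_eq hp _ hy, ← Nat.cast_pow, Int.natCast_modEq_iff, Nat.ModEq, Nat.mod_eq_of_lt (sum_range_mul_pow_lt hy)]

theorem Int.forall_modEq_iff_modEq_sum {ι : Type*} [Fintype ι] (q M c : ι → ℤ) {P : ℤ}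
    (hP : P = ∏ i, q i) (hco : Pairwise fun i j => IsCoprime (q i) (q j))
    (hM : ∀ i, M i * (P / q i) ≡ 1 [ZMOD q i]) (n : ℤ) :
    (∀ i, n ≡ c i [ZMOD q i]) ↔ n ≡ ∑ i, M i * (P / q i) * c i [ZMOD P] := by
  have hdvd : ∀ i, q i ∣ P := fun i => hP ▸ Finset.dvd_prod_of_mem q (Finset.mem_univ i)
  have hsum : ∀ i, ∑ j, M j * (P / q j) * c j ≡ c i [ZMOD q i] := by
    intro i
    have hother : ∀ j ∈ Finset.univ.erase i, q i ∣ M j * (P / q j) * c j := by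
      intro j hj
      have hcop : IsCoprime (q i) (q j) := hco (Finset.ne_of_mem_erase hj).symm
      have hP' : q i ∣ P / q j * q j := by rw [Int.ediv_mul_cancel (hdvd j)]; exact hdvd i
      exact ((hcop.dvd_of_dvd_mul_right hP').mul_left _).mul_right _
    rw [← Finset.add_sum_erase _ _ (Finset.mem_univ i)]
    calc M i * (P / q i) * c i + ∑ j ∈ Finset.univ.erase i, M j * (P / q j) * c j
        ≡ 1 * c i + 0 [ZMOD q i] :=
          ((hM i).mul_right _).add ((Int.modEq_zero_iff_dvd.2 (Finset.dvd_sum hother)))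
      _ = c i := by ring
  calc (∀ i, n ≡ c i [ZMOD q i])
      ↔ ∀ i, q i ∣ ∑ j, M j * (P / q j) * c j - n :=
        forall_congr' fun i => ⟨fun h => (h.trans (hsum i).symm).dvd,
          fun h => (Int.modEq_iff_dvd.2 h).trans (hsum i)⟩
    _ ↔ P ∣ ∑ j, M j * (P / q j) * c j - n :=
            ⟨fun h => by simpa only [← hP] using Fintype.prod_dvd_of_coprime hco h,
          fun h i => (hdvd i).trans h⟩
    _ ↔ _ := Int.modEq_iff_dvd.symm

lemma Int.ediv_eq_ediv_pow_mul_pow_pred {P a : ℤ} {r : ℕ} (ha : a ≠ 0) (hr : 1 ≤ r)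
    (h : a ^ r ∣ P) : P / a = P / a ^ r * a ^ (r - 1) := by
  obtain ⟨k, rfl⟩ := h
  obtain ⟨s, rfl⟩ : ∃ s, r = s + 1 := ⟨r - 1, by omega⟩
  rw [Int.mul_ediv_cancel_left _ (pow_ne_zero _ ha), Nat.add_sub_cancel, pow_succ', mul_assoc,
    Int.mul_ediv_cancel_left _ ha, mul_comm]

theorem stmt10_general (s : ℕ) (p r M : Fin s → ℕ)
    (hp : ∀ i, 2 ≤ p i) (hco : ∀ i j, i ≠ j → Nat.Coprime (p i) (p j))
    (hr : ∀ i, 1 ≤ r i)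
    (P : ℕ) (hP : P = ∏ i, p i ^ r i)
    (hM : ∀ i, M i * (P / p i ^ r i) ≡ 1 [MOD p i ^ r i])
    (x : Fin s → ℕ → ℕ) (hx : ∀ i j, 1 ≤ j → j ≤ r i → x i j < p i)
    (hxtop : ∀ i, x i (r i) ≠ 0) (n : ℕ) :
    (∀ i, (∑ j ∈ Finset.Icc 1 (r i), (x i j : ℝ) / (p i : ℝ) ^ j) - ((p i : ℝ) ^ r i)⁻¹
            ≤ radInv (p i) n ∧
        radInv (p i) n < ∑ j ∈ Finset.Icc 1 (r i), (x i j : ℝ) / (p i : ℝ) ^ j) ↔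
    (n : ℤ) ≡ (∑ i, (M i : ℤ) * ((P : ℤ) / (p i : ℤ) ^ r i) *
          (∑ j ∈ Finset.Icc 1 (r i), (x i j : ℤ) * (p i : ℤ) ^ (j - 1)))
        - ∑ i, (M i : ℤ) * ((P : ℤ) / p i) [ZMOD (P : ℤ)] := by
  have hPint : (P : ℤ) = ∏ i, (p i : ℤ) ^ r i := by rw [hP]; push_cast; rfl
  have hcop : Pairwise fun i j => IsCoprime ((p i : ℤ) ^ r i) ((p j : ℤ) ^ r j) :=
    fun i j hij => by exact_mod_cast Nat.isCoprime_iff_coprime.2 ((hco i j hij).pow _ _)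
  have hMint : ∀ i, (M i : ℤ) * ((P : ℤ) / (p i : ℤ) ^ r i) ≡ 1 [ZMOD (p i : ℤ) ^ r i] := by
    intro i
    exact_mod_cast Int.natCast_modEq_iff.2 (hM i)
  have hdiv : ∀ i, (P : ℤ) / p i = (P : ℤ) / (p i : ℤ) ^ r i * (p i : ℤ) ^ (r i - 1) :=
    fun i => Int.ediv_eq_ediv_pow_mul_pow_pred (by have := hp i; positivity) (hr i)
      (hPint ▸ Finset.dvd_prod_of_mem _ (Finset.mem_univ i))
  rw [forall_congr' fun i => radInv_mem_Ico_sub_iff_modEq (hp i) (hr i) (hx i) (hxtop i) n,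
    Int.forall_modEq_iff_modEq_sum _ (fun i => (M i : ℤ)) _ hPint hcop hMint,
    ← Finset.sum_sub_distrib]
  simp only [hdiv, mul_sub, mul_assoc]

theorem stmt10 (s : ℕ) (hs : 1 ≤ s) (p r M : Fin s → ℕ)
    (hp : ∀ i, 2 ≤ p i) (hco : ∀ i j, i ≠ j → Nat.Coprime (p i) (p j))
    (hr : ∀ i, 1 ≤ r i)
    (P : ℕ) (hP : P = ∏ i, p i ^ r i)
    (hM : ∀ i, M i * (P / p i ^ r i) ≡ 1 [MOD p i ^ r i])
    (x : Fin s → ℕ → ℕ) (hx : ∀ i j, 1 ≤ j → j ≤ r i → x i j < p i)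
    (hxtop : ∀ i, x i (r i) ≠ 0) (n : ℕ) :
    (∀ i, (∑ j ∈ Finset.Icc 1 (r i), (x i j : ℝ) / (p i : ℝ) ^ j) - ((p i : ℝ) ^ r i)⁻¹
            ≤ radInv (p i) n ∧
        radInv (p i) n < ∑ j ∈ Finset.Icc 1 (r i), (x i j : ℝ) / (p i : ℝ) ^ j) ↔
    (n : ℤ) ≡ (∑ i, (M i : ℤ) * ((P : ℤ) / (p i : ℤ) ^ r i) *
          (∑ j ∈ Finset.Icc 1 (r i), (x i j : ℤ) * (p i : ℤ) ^ (j - 1)))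
        - ∑ i, (M i : ℤ) * ((P : ℤ) / p i) [ZMOD (P : ℤ)] :=
  stmt10_general s p r M hp hco hr P hP hM x hx hxtop n
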